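/- arXiv:1610.02661 — 3 statements merged into one kernel-verified Lean document; each statement's English description precedes it below -/
import Mathlib

section
/- Let d ≥ 1 and x ∈ (0, π). Define θ₁ = arctan(sin x / (d - cos x)) and θ₂ = arctan(sin x / (3d - cos x)). Then 0 ≤ θ₁ + θ₂ ≤ π/2. -/
/-!
`arctan a + arctan b ≤ π / 2` as soon as `a, b ≥ 0` and `a * b ≤ 1`, since
`arctan a⁻¹ = π / 2 - arctan a`; and here
`a * b = (1 - cos x) (1 + cos x) / ((d - cos x) (3 d - cos x)) ≤ 1` factor by factor.
-/

open Real

theorem Real.arctan_add_arctan_le_pi_div_two {a b : ℝ} (ha : 0 ≤ a) (hab : a * b ≤ 1) :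
    arctan a + arctan b ≤ π / 2 := by
  rcases ha.eq_or_lt with rfl | ha
  · simpa using (arctan_lt_pi_div_two b).le
  have hb : b ≤ a⁻¹ := by rwa [← one_div, le_div_iff₀' ha]
  linarith [arctan_strictMono.monotone hb, arctan_inv_of_pos ha]

theorem sin_div_sub_cos_mul_sin_div_sub_cos_le_one {d x : ℝ} (hd : 1 ≤ d) :
    sin x / (d - cos x) * (sin x / (3 * d - cos x)) ≤ 1 := by
  have hc := neg_one_le_cos x
  have hc' := cos_le_one x
  rw [div_mul_div_comm]
  refine div_le_one_of_le₀ ?_ (by nlinarith)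
  nlinarith [sin_sq_add_cos_sq x]

theorem stmt5 (d x : ℝ) (hd : 1 ≤ d) (hx0 : 0 < x) (hxπ : x < π) :
    0 ≤ arctan (sin x / (d - cos x)) + arctan (sin x / (3 * d - cos x)) ∧
    arctan (sin x / (d - cos x)) + arctan (sin x / (3 * d - cos x)) ≤ π / 2 := by
  have hsin : 0 ≤ sin x := (sin_pos_of_pos_of_lt_pi hx0 hxπ).le
  have hcos : cos x ≤ 1 := cos_le_one x
  have h₁ : 0 ≤ sin x / (d - cos x) := div_nonneg hsin (by linarith)
  have h₂ : 0 ≤ sin x / (3 * d - cos x) := div_nonneg hsin (by linarith)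
  exact ⟨add_nonneg (arctan_nonneg.2 h₁) (arctan_nonneg.2 h₂),
    arctan_add_arctan_le_pi_div_two h₁ (sin_div_sub_cos_mul_sin_div_sub_cos_le_one hd)⟩
end

section
/- Let d ≥ 1, β ∈ [0,1], and x ∈ [-π, π]. Define f(β, x) = (1/2)(1 - e^{ix}/d)^{-β}(1 + (1 - e^{ix}/d)/2)^{-β} + (1/2)(1 - e^{-ix}/d)^{-β}(1 + (1 - e^{-ix}/d)/2)^{-β}, using principal branch complex powers. Then f(β, x) is real and f(β, x) ≥ 0. -/
open Real Complex

lemma my_arg_eq_arctan {z : ℂ} (hz : 0 < z.re) : z.arg = Real.arctan (z.im / z.re) := by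
  have h : |z.arg| < π/2 := Complex.abs_arg_lt_pi_div_two_iff.mpr (Or.inl hz)
  rw [← Complex.tan_arg z]
  exact (Real.arctan_tan (by linarith [(abs_lt.1 h).1]) (abs_lt.1 h).2).symm

lemma my_arctan_key {a b : ℝ} (ha : 0 ≤ a) (hb : 0 ≤ b) (hab : a * b ≤ 1) :
    Real.arctan a + Real.arctan b ≤ π / 2 := by
  rcases eq_or_lt_of_le hb with h | h
  · rw [← h, Real.arctan_zero]
    linarith [Real.arctan_lt_pi_div_two a]
  · have hib : a ≤ b⁻¹ := by
      rw [← one_div, le_div_iff₀ h]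
      exact hab
    have h2 : Real.arctan a ≤ Real.arctan b⁻¹ := Real.arctan_strictMono.monotone hib
    rw [Real.arctan_inv_of_pos h] at h2
    linarith

lemma my_arctan_nonneg {a : ℝ} (ha : 0 ≤ a) : 0 ≤ Real.arctan a := by
  rw [← Real.arctan_zero]
  exact Real.arctan_strictMono.monotone ha

lemma my_abs_arctan_add {a b : ℝ} (h0 : 0 ≤ a * b) (h1 : a * b ≤ 1) :
    |Real.arctan a + Real.arctan b| ≤ π / 2 := by
  have hpi := Real.pi_pos
  rcases le_or_gt 0 a with ha | ha
  · rcases le_or_gt 0 b with hb | hb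
    · rw [abs_le]
      refine ⟨?_, my_arctan_key ha hb h1⟩
      have := my_arctan_nonneg ha
      have := my_arctan_nonneg hb
      linarith
    · have ha0 : a = 0 := by nlinarith
      subst ha0
      simp only [Real.arctan_zero, zero_add]
      rw [abs_le]
      constructor <;> linarith [Real.arctan_lt_pi_div_two b, Real.neg_pi_div_two_lt_arctan b]
  · have hb : b ≤ 0 := by nlinarith
    have key := my_arctan_key (a := -a) (b := -b) (by linarith) (by linarith)
      (by nlinarith)
    rw [Real.arctan_neg, Real.arctan_neg] at key
    have h2 := my_arctan_nonneg (by linarith : (0:ℝ) ≤ -b)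
    rw [Real.arctan_neg] at h2
    have h3 : Real.arctan a < 0 := by
      have := Real.arctan_strictMono ha
      rwa [Real.arctan_zero] at this
    rw [abs_le]
    constructor <;> linarith

open Real Complex in
/-- The generating function `f(β,x)` of the Toeplitz matrix is real and nonnegative. -/
theorem stmt7 (d β x : ℝ) (hd : 1 ≤ d) (hβ0 : 0 ≤ β) (hβ1 : β ≤ 1)
    (hx1 : -π ≤ x) (hx2 : x ≤ π) :
    ((1 / 2 : ℂ) * ((1 : ℂ) - Complex.exp (x * Complex.I) / (d : ℂ)) ^ (-(β : ℂ)) *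
        (1 + ((1 : ℂ) - Complex.exp (x * Complex.I) / (d : ℂ)) / 2) ^ (-(β : ℂ)) +
      (1 / 2 : ℂ) * ((1 : ℂ) - Complex.exp (-x * Complex.I) / (d : ℂ)) ^ (-(β : ℂ)) *
        (1 + ((1 : ℂ) - Complex.exp (-x * Complex.I) / (d : ℂ)) / 2) ^ (-(β : ℂ))).im = 0 ∧
    0 ≤ ((1 / 2 : ℂ) * ((1 : ℂ) - Complex.exp (x * Complex.I) / (d : ℂ)) ^ (-(β : ℂ)) *
        (1 + ((1 : ℂ) - Complex.exp (x * Complex.I) / (d : ℂ)) / 2) ^ (-(β : ℂ)) +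
      (1 / 2 : ℂ) * ((1 : ℂ) - Complex.exp (-x * Complex.I) / (d : ℂ)) ^ (-(β : ℂ)) *
        (1 + ((1 : ℂ) - Complex.exp (-x * Complex.I) / (d : ℂ)) / 2) ^ (-(β : ℂ))).re := by
  have hd0 : (0:ℝ) < d := lt_of_lt_of_le one_pos hd
  set z : ℂ := 1 - Complex.exp (↑x * Complex.I) / (d : ℂ) with hzdef
  set w : ℂ := 1 + z / 2 with hwdef
  have hz_re : z.re = 1 - Real.cos x / d := by
    simp [hzdef, Complex.div_ofReal_re, Complex.exp_ofReal_mul_I_re]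
  have hz_im : z.im = -(Real.sin x / d) := by
    simp [hzdef, Complex.div_ofReal_im, Complex.exp_ofReal_mul_I_im]
  have hw_re : w.re = 1 + z.re / 2 := by simp [hwdef]
  have hw_im : w.im = z.im / 2 := by simp [hwdef]
  have hcos := Real.cos_le_one x
  have hzre0 : 0 ≤ z.re := by
    rw [hz_re]
    have : Real.cos x / d ≤ 1 := (div_le_one hd0).mpr (le_trans hcos hd)
    linarith
  have hwre0 : 0 < w.re := by rw [hw_re]; linarith
  -- conjugation facts
  have hconjz : (starRingEnd ℂ) z = 1 - Complex.exp (-↑x * Complex.I) / (d : ℂ) := by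
    simp only [hzdef, map_sub, map_one, map_div₀, ← Complex.exp_conj, map_mul,
      Complex.conj_ofReal, Complex.conj_I, mul_neg, neg_mul]
  have hconjw : (starRingEnd ℂ) w = 1 + (1 - Complex.exp (-↑x * Complex.I) / (d : ℂ)) / 2 := by
    simp only [hwdef, map_add, map_one, map_div₀, hconjz, map_ofNat]
  have hargz : z.arg ≠ π := by
    intro h
    rw [Complex.arg_eq_pi_iff] at h
    linarith [h.1]
  have hargw : w.arg ≠ π := by
    intro h
    rw [Complex.arg_eq_pi_iff] at h
    linarith [h.1]
  have hconjβ : (starRingEnd ℂ) (-(β:ℂ)) = -(β:ℂ) := by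
    simp [Complex.conj_ofReal]
  have hzp : (1 - Complex.exp (-↑x * Complex.I) / (d : ℂ)) ^ (-(β:ℂ))
      = (starRingEnd ℂ) (z ^ (-(β:ℂ))) := by
    rw [← hconjz, Complex.conj_cpow _ _ hargz, hconjβ]
  have hwp : (1 + (1 - Complex.exp (-↑x * Complex.I) / (d : ℂ)) / 2) ^ (-(β:ℂ))
      = (starRingEnd ℂ) (w ^ (-(β:ℂ))) := by
    rw [← hconjw, Complex.conj_cpow _ _ hargw, hconjβ]
  set T : ℂ := (1/2 : ℂ) * z ^ (-(β:ℂ)) * w ^ (-(β:ℂ)) with hT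
  have hTeq : ((1 / 2 : ℂ) * z ^ (-(β : ℂ)) * w ^ (-(β : ℂ)) +
      (1 / 2 : ℂ) * ((1 : ℂ) - Complex.exp (-↑x * Complex.I) / (d : ℂ)) ^ (-(β : ℂ)) *
        (1 + ((1 : ℂ) - Complex.exp (-↑x * Complex.I) / (d : ℂ)) / 2) ^ (-(β : ℂ)))
      = T + (starRingEnd ℂ) T := by
    rw [hzp, hwp, hT]
    simp only [map_mul, map_div₀, map_one, map_ofNat]
  rw [hTeq, Complex.add_conj]
  constructor
  · simp
  · simp only [Complex.ofReal_re]
    have hre : 0 ≤ (z ^ (-(β:ℂ)) * w ^ (-(β:ℂ))).re := by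
      rcases eq_or_lt_of_le hβ0 with hβz | hβpos
      · rw [← hβz]
        norm_num
      rcases eq_or_ne z 0 with hz0 | hz0
      · rw [hz0, Complex.zero_cpow (by
          simp only [ne_eq, neg_eq_zero, Complex.ofReal_eq_zero]
          linarith)]
        simp
      -- z ≠ 0, so z.re > 0
      have hzre : 0 < z.re := by
        rcases eq_or_lt_of_le hzre0 with h0 | h0
        · exfalso
          apply hz0
          have hcd : Real.cos x / d = 1 := by rw [hz_re] at h0; linarith
          have hc1 : Real.cos x = d := by field_simp at hcd; linarith
          have hd1 : d = 1 := le_antisymm (hc1 ▸ hcos) hd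
          have hs0 : Real.sin x = 0 := by
            nlinarith [Real.sin_sq_add_cos_sq x]
          apply Complex.ext
          · simp [← h0]
          · simp [hz_im, hs0]
        · exact h0
      have hw0 : w ≠ 0 := fun h => by rw [h] at hwre0; simp at hwre0
      rw [Complex.cpow_def_of_ne_zero hz0, Complex.cpow_def_of_ne_zero hw0,
        ← Complex.exp_add, ← add_mul]
      have him : ((Complex.log z + Complex.log w) * (-(β:ℂ))).im
          = (z.arg + w.arg) * (-β) := by
        simp [Complex.mul_im, Complex.log_im]
      have hre2 : ((Complex.log z + Complex.log w) * (-(β:ℂ))).re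
          = (Complex.log z + Complex.log w).re * (-β) := by
        simp [Complex.mul_re]
      rw [Complex.exp_re, him, hre2]
      have harg : |z.arg + w.arg| ≤ π / 2 := by
        rw [my_arg_eq_arctan hzre, my_arg_eq_arctan hwre0]
        apply my_abs_arctan_add
        · rw [div_mul_div_comm]
          apply div_nonneg
          · rw [hz_im, hw_im, hz_im]
            have : -(Real.sin x / d) * (-(Real.sin x / d) / 2) = (Real.sin x / d)^2 / 2 := by
              ring
            rw [this]
            positivity
          · positivity
        · rw [div_mul_div_comm, div_le_one (by positivity)]
          rw [hz_re, hz_im, hw_re, hw_im, hz_re, hz_im]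
          have hpyth := Real.sin_sq_add_cos_sq x
          have hineq : Real.sin x ^ 2 ≤ (d - Real.cos x) * (3*d - Real.cos x) := by
            nlinarith [sq_nonneg (Real.cos x - d),
              mul_nonneg (sub_nonneg.2 hd) (by linarith : (0:ℝ) ≤ d + 1)]
          have e1 : -(Real.sin x / d) * (-(Real.sin x / d) / 2)
              = Real.sin x ^ 2 / (2 * d^2) := by ring
          have e2 : (1 - Real.cos x / d) * (1 + (1 - Real.cos x / d) / 2)
              = (d - Real.cos x) * (3*d - Real.cos x) / (2 * d^2) := by
            field_simp
            ring
          rw [e1, e2]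
          gcongr
      have hcosn : 0 ≤ Real.cos ((z.arg + w.arg) * (-β)) := by
        apply Real.cos_nonneg_of_neg_pi_div_two_le_of_le
        · have : |(z.arg + w.arg) * (-β)| ≤ π/2 := by
            rw [abs_mul, abs_neg, _root_.abs_of_nonneg hβ0]
            calc |z.arg + w.arg| * β ≤ (π/2) * 1 := by
                  apply mul_le_mul harg hβ1 hβ0 (by positivity)
              _ = π/2 := by ring
          linarith [(abs_le.1 this).1]
        · have : |(z.arg + w.arg) * (-β)| ≤ π/2 := by
            rw [abs_mul, abs_neg, _root_.abs_of_nonneg hβ0]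
            calc |z.arg + w.arg| * β ≤ (π/2) * 1 := by
                  apply mul_le_mul harg hβ1 hβ0 (by positivity)
              _ = π/2 := by ring
          exact (abs_le.1 this).2
      positivity
    have hTre : T.re = (1/2) * (z ^ (-(β:ℂ)) * w ^ (-(β:ℂ))).re := by
      rw [hT, mul_assoc, show ((1:ℂ)/2) = ((1/2 : ℝ):ℂ) by norm_num,
        Complex.re_ofReal_mul]
    rw [hTre]
    linarith
end

section
/- Let λ ≥ 0, τ > 0, β ∈ (0,1], and l_k = e^{-λkτ}(3/2)^{-β} Σ_{m=0}^{k} 3^{-m} g_m g_{k-m} with g_m = β(β+1)···(β+m-1)/m!. Then for any positive integer N and any real vector (v_0, ..., v_N), one has Σ_{n=0}^{N} (Σ_{k=0}^{n} l_k v_{n-k}) v_n ≥ 0. -/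
noncomputable def g (β : ℝ) (m : ℕ) : ℝ :=
  (∏ i ∈ Finset.range m, (β + i)) / (Nat.factorial m : ℝ)

noncomputable def lcoef (β lam τ : ℝ) (k : ℕ) : ℝ :=
  Real.exp (-lam * k * τ) * (3 / 2 : ℝ) ^ (-β) *
    ∑ m ∈ Finset.range (k + 1), ((3 : ℝ) ^ m)⁻¹ * g β m * g β (k - m)

/-!
Each `g β m` is the `m`-th moment of a probability measure on `[0, 1]`: the Beta(β, 1 - β) law,
or the Dirac mass at `1` when `β = 1`. Writing `s = e^{-λτ}`, the coefficients `l_k` are therefore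
an average over `(t, u) ∈ [0, 1]²` of the kernels `K_k = ∑_{i ≤ k} p^i q^{k-i}` with `p = ts/3`,
`q = us`, and the quadratic form is linear in its coefficients, so it suffices to treat one kernel.
With `y = K ⋆ v` one has `v_n = y_n - (p + q) y_{n-1} + pq y_{n-2}`, and for `p ≤ 1/3`, `q ≤ 1`
the form `∑ v_n y_n` is a sum of squares of `y`, `Δy`, `Δ²y` plus a nonnegative boundary term.
-/

open Finset MeasureTheory ProbabilityTheory

noncomputable def causalForm (a : ℕ → ℝ) (N : ℕ) (v : ℕ → ℝ) : ℝ :=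
  ∑ n ∈ range (N + 1), (∑ k ∈ range (n + 1), a k * v (n - k)) * v n

theorem causalForm_const_mul (c : ℝ) (a : ℕ → ℝ) (N : ℕ) (v : ℕ → ℝ) :
    causalForm (fun k => c * a k) N v = c * causalForm a N v := by
  simp only [causalForm, mul_sum, sum_mul, mul_assoc]

theorem causalForm_integral {α : Type*} [MeasurableSpace α] {μ : Measure α} {F : α → ℕ → ℝ}
    (hF : ∀ k, Integrable (F · k) μ) (N : ℕ) (v : ℕ → ℝ) :
    causalForm (fun k => ∫ x, F x k ∂μ) N v = ∫ x, causalForm (F x) N v ∂μ := by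
  have hrow : ∀ n, Integrable (fun x => ∑ k ∈ range (n + 1), F x k * v (n - k)) μ := fun n =>
    integrable_finsetSum _ fun k _ => (hF k).mul_const _
  simp only [causalForm]
  rw [integral_finsetSum _ fun n _ => (hrow n).mul_const _]
  refine sum_congr rfl fun n _ => ?_
  rw [integral_mul_const, integral_finsetSum _ fun k _ => (hF k).mul_const _]
  simp only [integral_mul_const]

theorem sum_secondOrder_mul_nonneg {a b : ℝ} (hb : 0 ≤ b) (hab : 4 * b ≤ a) (ha : a ≤ 1 + b)
    (z : ℕ → ℝ) (hz0 : z 0 = 0) (hz1 : z 1 = 0) (M : ℕ) :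
    0 ≤ ∑ n ∈ range M, (z (n + 2) - a * z (n + 1) + b * z n) * z (n + 2) := by
  set Φ : ℕ → ℝ := fun n => b / 2 * (z n - 2 * z (n + 1)) ^ 2 + (a - 3 * b) / 2 * z (n + 1) ^ 2
  -- Summation by parts: a nonnegative combination of `z`, `Δz`, `Δ²z` squared, plus the
  -- telescoping boundary term `Φ`, which is nonnegative because `a ≥ 3b`.
  have hsplit : ∀ n, (z (n + 2) - a * z (n + 1) + b * z n) * z (n + 2) =
      ((1 - a + b) * z (n + 2) ^ 2 + (a - 4 * b) / 2 * (z (n + 2) - z (n + 1)) ^ 2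
        + b / 2 * (z (n + 2) - 2 * z (n + 1) + z n) ^ 2) + (Φ (n + 1) - Φ n) := fun n => by
    simp only [Φ]; ring
  rw [sum_congr rfl fun n _ => hsplit n, sum_add_distrib, sum_range_sub]
  have hΦ0 : Φ 0 = 0 := by simp [Φ, hz0, hz1]
  have hΦM : 0 ≤ Φ M := by
    have : 0 ≤ a - 3 * b := by linarith
    simp only [Φ]; positivity
  have hsos : 0 ≤ ∑ n ∈ range M, ((1 - a + b) * z (n + 2) ^ 2
      + (a - 4 * b) / 2 * (z (n + 2) - z (n + 1)) ^ 2
      + b / 2 * (z (n + 2) - 2 * z (n + 1) + z n) ^ 2) := by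
    have h1 : 0 ≤ 1 - a + b := by linarith
    have h2 : 0 ≤ a - 4 * b := by linarith
    exact sum_nonneg fun n _ => by positivity
  linarith

section GeneratingFunction

open PowerSeries

theorem sum_range_mul_sub_eq_coeff_mul (a v : ℕ → ℝ) (n : ℕ) :
    ∑ k ∈ range (n + 1), a k * v (n - k) = coeff n (PowerSeries.mk a * PowerSeries.mk v) := by
  rw [coeff_mul, Nat.sum_antidiagonal_eq_sum_range_succ_mk]
  simp

theorem mk_pow_mul_one_sub (p : ℝ) : PowerSeries.mk (p ^ ·) * (1 - C p * X) = 1 := by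
  have := congrArg (rescale p) (mk_one_mul_one_sub_eq_one ℝ)
  simpa [rescale_mk] using this

noncomputable def twoGeomConv (p q : ℝ) (k : ℕ) : ℝ := ∑ i ∈ range (k + 1), p ^ i * q ^ (k - i)

theorem mk_twoGeomConv (p q : ℝ) :
    PowerSeries.mk (twoGeomConv p q) = PowerSeries.mk (p ^ ·) * PowerSeries.mk (q ^ ·) := by
  ext k
  rw [coeff_mk, ← sum_range_mul_sub_eq_coeff_mul]
  rfl

theorem causalForm_twoGeomConv_nonneg {p q : ℝ} (hp : p ∈ Set.Icc 0 (1 / 3))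
    (hq : q ∈ Set.Icc 0 1) (N : ℕ) (v : ℕ → ℝ) : 0 ≤ causalForm (twoGeomConv p q) N v := by
  obtain ⟨hp0, hp1⟩ := hp
  obtain ⟨hq0, hq1⟩ := hq
  -- `twoGeomConv p q` has generating function `1 / ((1 - pX)(1 - qX))`, so `v` is recovered from
  -- `Y = twoGeomConv p q ⋆ v` by a second-order difference, written for `Z = X² Y`.
  set Y := PowerSeries.mk (twoGeomConv p q) * PowerSeries.mk v
  set Z : PowerSeries ℝ := X ^ 2 * Y
  have hinv : PowerSeries.mk (twoGeomConv p q) * ((1 - C p * X) * (1 - C q * X)) = 1 := by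
    rw [mk_twoGeomConv, mul_mul_mul_comm, mk_pow_mul_one_sub, mk_pow_mul_one_sub, one_mul]
  have hZ : X ^ 2 * PowerSeries.mk v = Z - C (p + q) * (X * Z) + C (p * q) * (X ^ 2 * Z) := by
    simp only [Z, Y, map_add, map_mul]
    linear_combination -(X ^ 2 * PowerSeries.mk v) * hinv
  have hv : ∀ n, v n = coeff (n + 2) Z - (p + q) * coeff (n + 1) Z + p * q * coeff n Z := by
    intro n
    have := congrArg (coeff (n + 2)) hZ
    simpa only [coeff_X_pow_mul, coeff_mk, map_add, map_sub, coeff_succ_X_mul, coeff_C_mul,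
      add_mul] using this
  have hy : ∀ n, coeff n Y = coeff (n + 2) Z := fun n => (coeff_X_pow_mul Y 2 n).symm
  have hform : causalForm (twoGeomConv p q) N v = ∑ n ∈ range (N + 1),
      (coeff (n + 2) Z - (p + q) * coeff (n + 1) Z + p * q * coeff n Z) * coeff (n + 2) Z := by
    refine sum_congr rfl fun n _ => ?_
    rw [sum_range_mul_sub_eq_coeff_mul, hy, ← hv, mul_comm]
  rw [hform]
  refine sum_secondOrder_mul_nonneg (mul_nonneg hp0 hq0) ?_ ?_ (coeff · Z) ?_ ?_ _
  · nlinarith [mul_nonneg hq0 (by linarith : 0 ≤ 1 - 3 * p),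
      mul_nonneg hp0 (by linarith : 0 ≤ 1 - q)]
  · nlinarith [mul_nonneg (by linarith : 0 ≤ 1 - p) (by linarith : 0 ≤ 1 - q)]
  · simp [Z, coeff_X_pow_mul']
  · simp [Z, coeff_X_pow_mul']

end GeneratingFunction

theorem integrable_pow_of_ae_mem_Icc {μ : Measure ℝ} [IsFiniteMeasure μ]
    (hμ : ∀ᵐ t ∂μ, t ∈ Set.Icc (0 : ℝ) 1) (m : ℕ) : Integrable (fun t : ℝ => t ^ m) μ := by
  refine Integrable.of_bound (by fun_prop) 1 ?_
  filter_upwards [hμ] with t ht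
  rw [norm_pow, Real.norm_of_nonneg ht.1]
  exact pow_le_one₀ ht.1 ht.2

theorem causalForm_moments_nonneg {μ ν : Measure ℝ} [IsFiniteMeasure μ] [IsFiniteMeasure ν]
    (hμ : ∀ᵐ t ∂μ, t ∈ Set.Icc (0 : ℝ) 1) (hν : ∀ᵐ u ∂ν, u ∈ Set.Icc (0 : ℝ) 1)
    {p q : ℝ} (hp : p ∈ Set.Icc 0 (1 / 3)) (hq : q ∈ Set.Icc 0 1) (N : ℕ) (v : ℕ → ℝ) :
    0 ≤ causalForm (fun k => ∑ m ∈ range (k + 1),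
      p ^ m * q ^ (k - m) * ((∫ t, t ^ m ∂μ) * ∫ u, u ^ (k - m) ∂ν)) N v := by
  have hterm : ∀ i j, Integrable (fun z : ℝ × ℝ => p ^ i * q ^ j * (z.1 ^ i * z.2 ^ j))
      (μ.prod ν) := fun i j =>
    ((integrable_pow_of_ae_mem_Icc hμ i).mul_prod (integrable_pow_of_ae_mem_Icc hν j)).const_mul _
  have hsummand : ∀ k m, Integrable
      (fun z : ℝ × ℝ => (z.1 * p) ^ m * (z.2 * q) ^ (k - m)) (μ.prod ν) := fun k m =>
    (hterm m (k - m)).congr (ae_of_all _ fun z => by simp only; ring)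
  have hcoef : ∀ k, ∑ m ∈ range (k + 1),
      p ^ m * q ^ (k - m) * ((∫ t, t ^ m ∂μ) * ∫ u, u ^ (k - m) ∂ν)
      = ∫ z, twoGeomConv (z.1 * p) (z.2 * q) k ∂(μ.prod ν) := fun k => by
    simp only [twoGeomConv]
    rw [integral_finsetSum _ fun m _ => hsummand k m]
    refine sum_congr rfl fun m _ => ?_
    rw [← integral_prod_mul, ← integral_const_mul]
    congr 1; ext z; ring
  simp only [hcoef]
  have hK : ∀ k, Integrable (fun z : ℝ × ℝ => twoGeomConv (z.1 * p) (z.2 * q) k) (μ.prod ν) :=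
    fun k => integrable_finsetSum _ fun m _ => hsummand k m
  rw [causalForm_integral hK]
  refine integral_nonneg_of_ae ?_
  filter_upwards [Measure.quasiMeasurePreserving_fst.ae hμ,
    Measure.quasiMeasurePreserving_snd.ae hν] with z ht hu
  refine causalForm_twoGeomConv_nonneg ⟨by nlinarith [hp.1, ht.1], ?_⟩ ⟨?_, ?_⟩ N v
  · nlinarith [hp.1, hp.2, ht.1, ht.2]
  · nlinarith [hq.1, hu.1]
  · nlinarith [hq.1, hq.2, hu.1, hu.2]

theorem betaPDFReal_nonneg {a b : ℝ} (ha : 0 < a) (hb : 0 < b) (t : ℝ) :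
    0 ≤ betaPDFReal a b t := by
  by_cases ht : 0 < t ∧ t < 1
  · exact (betaPDFReal_pos ht.1 ht.2 ha hb).le
  · simp [betaPDFReal, ht]

theorem measurable_betaPDF (a b : ℝ) : Measurable (betaPDF a b) :=
  (measurable_betaPDFReal a b).ennreal_ofReal

theorem integral_betaMeasure {a b : ℝ} (ha : 0 < a) (hb : 0 < b) (f : ℝ → ℝ) :
    ∫ t, f t ∂betaMeasure a b = ∫ t, betaPDFReal a b t * f t := by
  rw [betaMeasure, integral_withDensity_eq_integral_toReal_smul
    (measurable_betaPDF a b) (ae_of_all _ fun _ => ENNReal.ofReal_lt_top)]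
  simp only [betaPDF, ENNReal.toReal_ofReal (betaPDFReal_nonneg ha hb _), smul_eq_mul]

theorem integral_betaPDFReal {a b : ℝ} (ha : 0 < a) (hb : 0 < b) :
    ∫ t, betaPDFReal a b t = 1 := by
  have := isProbabilityMeasureBeta ha hb
  simpa using (integral_betaMeasure ha hb fun _ => 1).symm

theorem betaPDFReal_mul_pow {a b : ℝ} (ha : 0 < a) (hb : 0 < b) (m : ℕ) (t : ℝ) :
    betaPDFReal a b t * t ^ m = beta (a + m) b / beta a b * betaPDFReal (a + m) b t := by
  have hB := (beta_pos (by positivity : 0 < a + m) hb).ne'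
  unfold betaPDFReal
  split_ifs with ht
  · rw [show a + m - 1 = (a - 1) + m by ring, Real.rpow_add ht.1, Real.rpow_natCast]
    field_simp
  · simp

theorem integral_pow_betaMeasure {a b : ℝ} (ha : 0 < a) (hb : 0 < b) (m : ℕ) :
    ∫ t, t ^ m ∂betaMeasure a b = beta (a + m) b / beta a b := by
  simp only [integral_betaMeasure ha hb, betaPDFReal_mul_pow ha hb, integral_const_mul,
    integral_betaPDFReal (by positivity : 0 < a + m) hb, mul_one]

theorem ae_betaMeasure_mem_Icc (a b : ℝ) : ∀ᵐ t ∂betaMeasure a b, t ∈ Set.Icc (0 : ℝ) 1 := by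
  rw [betaMeasure, ae_withDensity_iff (measurable_betaPDF a b)]
  refine ae_of_all _ fun t ht => ?_
  contrapose! ht
  rw [betaPDF_eq, if_neg fun h => ht ⟨h.1.le, h.2.le⟩, ENNReal.ofReal_zero]

theorem Real.Gamma_add_nat_eq_mul_prod {β : ℝ} (hβ : 0 < β) (m : ℕ) :
    Real.Gamma (β + m) = Real.Gamma β * ∏ i ∈ range m, (β + i) := by
  induction m with
  | zero => simp
  | succ m ih =>
    rw [prod_range_succ, Nat.cast_succ, ← add_assoc, Real.Gamma_add_one (by positivity), ih]
    ring

theorem g_eq_beta_div_beta {β : ℝ} (hβ0 : 0 < β) (hβ1 : β < 1) (m : ℕ) :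
    g β m = beta (β + m) (1 - β) / beta β (1 - β) := by
  have hΓ : Real.Gamma β ≠ 0 := (Real.Gamma_pos_of_pos hβ0).ne'
  have hΓ' : Real.Gamma (1 - β) ≠ 0 := (Real.Gamma_pos_of_pos (by linarith)).ne'
  rw [g, beta, beta, Real.Gamma_add_nat_eq_mul_prod hβ0, show β + m + (1 - β) = m + 1 by ring,
    Real.Gamma_nat_eq_factorial, add_sub_cancel, Real.Gamma_one]
  field_simp

theorem g_one (m : ℕ) : g 1 m = 1 := by
  have h : ∏ i ∈ range m, ((1 : ℝ) + i) = m.factorial := by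
    rw [← prod_range_add_one_eq_factorial]; push_cast; simp only [add_comm]
  rw [g, h, div_self (by positivity)]

theorem exists_moment_measure_g {β : ℝ} (hβ0 : 0 < β) (hβ1 : β ≤ 1) :
    ∃ μ : Measure ℝ, IsFiniteMeasure μ ∧ (∀ᵐ t ∂μ, t ∈ Set.Icc (0 : ℝ) 1) ∧
      ∀ m, g β m = ∫ t, t ^ m ∂μ := by
  rcases hβ1.lt_or_eq with hβ1 | rfl
  · have := isProbabilityMeasureBeta hβ0 (sub_pos.2 hβ1)
    refine ⟨betaMeasure β (1 - β), inferInstance, ae_betaMeasure_mem_Icc _ _, fun m => ?_⟩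
    rw [g_eq_beta_div_beta hβ0 hβ1, integral_pow_betaMeasure hβ0 (sub_pos.2 hβ1)]
  · exact ⟨Measure.dirac 1, inferInstance, by simp, fun m => by simp [g_one]⟩

theorem lcoef_eq (β lam τ : ℝ) :
    lcoef β lam τ = fun k => (3 / 2 : ℝ) ^ (-β) * ∑ m ∈ range (k + 1),
      (Real.exp (-(lam * τ)) / 3) ^ m * Real.exp (-(lam * τ)) ^ (k - m) *
        (g β m * g β (k - m)) := by
  ext k
  set s := Real.exp (-(lam * τ))
  have hexp : Real.exp (-lam * k * τ) = s ^ k := by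
    rw [← Real.exp_nat_mul]; congr 1; ring
  rw [lcoef, hexp, mul_comm (s ^ k), mul_assoc, mul_sum]
  congr 1
  refine sum_congr rfl fun m hm => ?_
  rw [← pow_mul_pow_sub s (Nat.le_of_lt_succ (mem_range.1 hm)), div_pow, inv_eq_one_div]
  ring

theorem stmt11_general (lam τ β : ℝ) (hlam : 0 ≤ lam) (hτ : 0 < τ)
    (hβ0 : 0 < β) (hβ1 : β ≤ 1) (N : ℕ) (v : ℕ → ℝ) :
    0 ≤ ∑ n ∈ Finset.range (N + 1),
      (∑ k ∈ Finset.range (n + 1), lcoef β lam τ k * v (n - k)) * v n := by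
  obtain ⟨μ, _, hμ, hg⟩ := exists_moment_measure_g hβ0 hβ1
  set s := Real.exp (-(lam * τ))
  have hs : s ∈ Set.Icc 0 1 := ⟨(Real.exp_pos _).le, Real.exp_le_one_iff.2 (by nlinarith)⟩
  have hs3 : s / 3 ∈ Set.Icc 0 (1 / 3) := ⟨by linarith [hs.1], by linarith [hs.2]⟩
  change 0 ≤ causalForm (lcoef β lam τ) N v
  rw [lcoef_eq, causalForm_const_mul]
  simp only [hg]
  exact mul_nonneg (Real.rpow_nonneg (by norm_num) _) (causalForm_moments_nonneg hμ hμ hs3 hs N v)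

/-- Lemma 3.4: the Toeplitz quadratic form built from the coefficients `l_k`
is nonnegative. -/
theorem stmt11 (lam τ β : ℝ) (hlam : 0 ≤ lam) (hτ : 0 < τ)
    (hβ0 : 0 < β) (hβ1 : β ≤ 1) (N : ℕ) (hN : 0 < N) (v : ℕ → ℝ) :
    0 ≤ ∑ n ∈ Finset.range (N + 1),
      (∑ k ∈ Finset.range (n + 1), lcoef β lam τ k * v (n - k)) * v n :=
  stmt11_general lam τ β hlam hτ hβ0 hβ1 N v
end
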